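/- arXiv:1207.4738 — 6 statements merged into one kernel-verified Lean document; each statement's English description precedes it below -/
import Mathlib

section
/- Let Ω be a finite set of players and let G ≤ S_Ω be a group of permutations of Ω. A linear game value φ, represented in the unanimity basis {u_R} and the canonical basis of ℝ^Ω by the matrix (a_{iR}) with a_{iR} = φ(u_R)({i}) for i ∈ Ω and ∅ ≠ R ⊆ Ω, is a G-symmetric quasi-value if and only if: (1) a_{iR} = 0 whenever i ∉ R, (2) for every nonempty R ⊆ Ω, the column sum ∑_{i∈Ω} a_{iR} = 1, and (3) the coefficients a_{iR} are constant on the orbits of the G-action g·(i,R) = (g·i, g·R). -/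
open scoped BigOperators

/-- The space of cooperative games on player set `Ω`: real-valued functions on
coalitions vanishing on the empty coalition. -/
def GameSpace (Ω : Type*) [DecidableEq Ω] : Submodule ℝ (Finset Ω → ℝ) where
  carrier := {v | v ∅ = 0}
  add_mem' := by
    intro a b ha hb
    simp only [Set.mem_setOf_eq, Pi.add_apply] at *
    simp [ha, hb]
  zero_mem' := rfl
  smul_mem' := by
    intro c v hv
    simp only [Set.mem_setOf_eq, Pi.smul_apply] at *
    simp [hv]

/-- A (linear) game value: a linear operator from games to payoff vectors. -/
abbrev GameValue (Ω : Type*) [DecidableEq Ω] := GameSpace Ω →ₗ[ℝ] (Ω → ℝ)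

/-- Player `i` is a null player of the game `v`: `v(R ∪ {i}) = v(R)` for all `R`. -/
def IsNullPlayer {Ω : Type*} [DecidableEq Ω] (i : Ω) (v : GameSpace Ω) : Prop :=
  ∀ R : Finset Ω, (v : Finset Ω → ℝ) (insert i R) = (v : Finset Ω → ℝ) R

/-- A quasi-value: a linear game value satisfying the null-player property and
efficiency. -/
def IsQuasiValue {Ω : Type*} [Fintype Ω] [DecidableEq Ω] (φ : GameValue Ω) : Prop :=
  (∀ (v : GameSpace Ω) (i : Ω), IsNullPlayer i v → φ v i = 0) ∧
  (∀ v : GameSpace Ω, ∑ i, φ v i = (v : Finset Ω → ℝ) Finset.univ)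

/-- The action of a permutation on a game: `(g • v)(R) = v(g⁻¹(R))`. -/
def permGame {Ω : Type*} [DecidableEq Ω] (g : Equiv.Perm Ω) (v : GameSpace Ω) :
    GameSpace Ω :=
  ⟨fun R => (v : Finset Ω → ℝ) (R.image (g⁻¹ : Equiv.Perm Ω)), by
    show (v : Finset Ω → ℝ) ((∅ : Finset Ω).image (g⁻¹ : Equiv.Perm Ω)) = 0
    rw [Finset.image_empty]
    exact v.2⟩

/-- `φ` is symmetric with respect to all permutations in `G`:
`φ(g • v) = g • φ(v)`, i.e. `φ(g • v)ᵢ = φ(v)_{g⁻¹ i}` for all `g ∈ G`. -/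
def IsGSym {Ω : Type*} [DecidableEq Ω] (G : Subgroup (Equiv.Perm Ω))
    (φ : GameValue Ω) : Prop :=
  ∀ g ∈ G, ∀ (v : GameSpace Ω) (i : Ω), φ (permGame g v) i = φ v (g⁻¹ i)

/-- The unanimity game `u_R` for a nonempty coalition `R`. -/
def unanimity {Ω : Type*} [DecidableEq Ω] (R : Finset Ω) (hR : R.Nonempty) :
    GameSpace Ω :=
  ⟨fun S => if R ⊆ S then (1 : ℝ) else 0, by
    show (if R ⊆ (∅ : Finset Ω) then (1 : ℝ) else 0) = 0
    simp [Finset.subset_empty, hR.ne_empty]⟩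

/-!
By Möbius inversion the zeta transform `d ↦ (S ↦ ∑_{R ⊆ S} d R)` on set functions is injective,
hence surjective, so the unanimity games span the space of games (the coefficients are the
Harsanyi dividends). Efficiency and `G`-symmetry are then identities between linear maps that
may be checked on unanimity games, where they become conditions (2) and (3). The null-player
property reduces to (1) the same way through the linear map `v ↦ (S ↦ v (S \ {i}))`, which fixes
every game in which `i` is null and kills `u_R` whenever `i ∈ R`.
-/

open Finset

section Moebius

variable {Ω : Type*} [DecidableEq Ω]

def sumPowersetₗ : (Finset Ω → ℝ) →ₗ[ℝ] (Finset Ω → ℝ) where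
  toFun d S := ∑ R ∈ S.powerset, d R
  map_add' d e := by ext; simp [sum_add_distrib]
  map_smul' c d := by ext; simp [mul_sum]

lemma sumPowersetₗ_injective : Function.Injective (sumPowersetₗ (Ω := Ω)) := by
  refine (injective_iff_map_eq_zero _).2 fun d hd => funext fun S => ?_
  have hzero (x : Finset Ω) : (0 : Finset Ω → ℝ) x = ∑ R ∈ Iic x, d R := by
    rw [Iic_eq_powerset]
    exact (congrFun hd x).symm
  simp [IncidenceAlgebra.moebius_inversion_bot d 0 hzero]

lemma exists_sum_powerset_eq [Fintype Ω] (v : Finset Ω → ℝ) :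
    ∃ d : Finset Ω → ℝ, ∀ S, ∑ R ∈ S.powerset, d R = v S := by
  obtain ⟨d, hd⟩ := LinearMap.injective_iff_surjective.1 sumPowersetₗ_injective v
  exact ⟨d, congrFun hd⟩

end Moebius

section Games

variable {Ω : Type*} [DecidableEq Ω]

lemma unanimity_apply (R : Finset Ω) (hR : R.Nonempty) (S : Finset Ω) :
    (unanimity R hR : Finset Ω → ℝ) S = if R ⊆ S then 1 else 0 := rfl

lemma isNullPlayer_unanimity {R : Finset Ω} (hR : R.Nonempty) {i : Ω} (hi : i ∉ R) :
    IsNullPlayer i (unanimity R hR) := fun S => by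
  simp only [unanimity_apply, subset_insert_iff_of_notMem hi]

lemma permGame_unanimity (g : Equiv.Perm Ω) (R : Finset Ω) (hR : R.Nonempty) :
    permGame g (unanimity R hR) = unanimity (R.image g) (hR.image g) := by
  ext S
  simp [permGame, unanimity_apply, subset_iff, Equiv.symm_apply_eq]

variable (Ω) in
lemma span_unanimity [Fintype Ω] :
    Submodule.span ℝ (Set.range fun R : {R : Finset Ω // R.Nonempty} => unanimity R.1 R.2) =
      ⊤ := by
  refine Submodule.eq_top_iff'.2 fun v => ?_
  obtain ⟨d, hd⟩ := exists_sum_powerset_eq (v : Finset Ω → ℝ)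
  have hd_empty : d ∅ = 0 := by simpa using (hd ∅).trans v.2
  suffices v = ∑ R : {R : Finset Ω // R.Nonempty}, d R • unanimity R.1 R.2 from
    this ▸ Submodule.sum_mem _ fun R _ =>
      Submodule.smul_mem _ _ (Submodule.subset_span ⟨R, rfl⟩)
  ext S
  simp only [← hd S, Submodule.coe_sum, Submodule.coe_smul, Finset.sum_apply, Pi.smul_apply,
    unanimity_apply, smul_eq_mul, mul_ite, mul_one, mul_zero]
  rw [← sum_subtype (univ.filter Finset.Nonempty) (by simp) fun R => if R ⊆ S then d R else 0,
    sum_filter, ← filter_subset_univ S, sum_filter]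
  refine sum_congr rfl fun R _ => ?_
  rcases R.eq_empty_or_nonempty with rfl | hR <;> simp [*]

lemma linearMap_ext_unanimity [Fintype Ω] {M : Type*} [AddCommMonoid M] [Module ℝ M]
    {f g : GameSpace Ω →ₗ[ℝ] M} (h : ∀ R hR, f (unanimity R hR) = g (unanimity R hR)) :
    f = g :=
  LinearMap.ext_on_range (span_unanimity Ω) fun R => h R.1 R.2

def permGameₗ (g : Equiv.Perm Ω) : GameSpace Ω →ₗ[ℝ] GameSpace Ω where
  toFun := permGame g
  map_add' _ _ := rfl
  map_smul' _ _ := rfl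

def eraseGame (i : Ω) : GameSpace Ω →ₗ[ℝ] GameSpace Ω where
  toFun v := ⟨fun S => (v : Finset Ω → ℝ) (S.erase i), by
    show (v : Finset Ω → ℝ) ((∅ : Finset Ω).erase i) = 0
    rw [erase_empty]
    exact v.2⟩
  map_add' _ _ := rfl
  map_smul' _ _ := rfl

lemma eraseGame_eq_self {i : Ω} {v : GameSpace Ω} (hv : IsNullPlayer i v) :
    eraseGame i v = v := by
  ext S
  show (v : Finset Ω → ℝ) (S.erase i) = (v : Finset Ω → ℝ) S
  by_cases hi : i ∈ S
  · rw [← hv, insert_erase hi]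
  · rw [erase_eq_of_notMem hi]

lemma eraseGame_unanimity {i : Ω} {R : Finset Ω} (hR : R.Nonempty) (hi : i ∈ R) :
    eraseGame i (unanimity R hR) = 0 := by
  ext S
  show (if R ⊆ S.erase i then (1 : ℝ) else 0) = 0
  exact if_neg fun h => notMem_erase i S (h hi)

end Games

section Characterization

variable {Ω : Type*} [Fintype Ω] [DecidableEq Ω] {φ : GameValue Ω}

lemma apply_eq_zero_of_isNullPlayer
    (hφ : ∀ (R : Finset Ω) (hR : R.Nonempty), ∀ i ∉ R, φ (unanimity R hR) i = 0)
    {v : GameSpace Ω} {i : Ω} (hv : IsNullPlayer i v) : φ v i = 0 := by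
  have : (LinearMap.proj i).comp (φ.comp (eraseGame i)) = 0 :=
    linearMap_ext_unanimity fun R hR => by
      by_cases hi : i ∈ R
      · simp [eraseGame_unanimity hR hi]
      · simp [eraseGame_eq_self (isNullPlayer_unanimity hR hi), hφ R hR i hi]
  simpa [eraseGame_eq_self hv] using LinearMap.congr_fun this v

lemma sum_apply_eq_apply_univ
    (hφ : ∀ (R : Finset Ω) (hR : R.Nonempty), ∑ i, φ (unanimity R hR) i = 1)
    (v : GameSpace Ω) : ∑ i, φ v i = (v : Finset Ω → ℝ) univ := by
  have : ∑ i, (LinearMap.proj i).comp φ = (LinearMap.proj univ).comp (GameSpace Ω).subtype :=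
    linearMap_ext_unanimity fun R hR => by simp [hφ R hR, unanimity_apply]
  simpa using LinearMap.congr_fun this v

lemma apply_permGame {g : Equiv.Perm Ω}
    (hφ : ∀ (R : Finset Ω) (hR : R.Nonempty) (i : Ω),
      φ (unanimity R hR) i = φ (unanimity (R.image g) (hR.image g)) (g i))
    (v : GameSpace Ω) (i : Ω) : φ (permGame g v) i = φ v (g⁻¹ i) := by
  have : (LinearMap.proj i).comp (φ.comp (permGameₗ g)) = (LinearMap.proj (g⁻¹ i)).comp φ :=
    linearMap_ext_unanimity fun R hR => by
      show φ (permGame g _) i = φ _ (g⁻¹ i)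
      rw [permGame_unanimity, hφ R hR (g⁻¹ i), Equiv.Perm.coe_inv, Equiv.apply_symm_apply]
  exact LinearMap.congr_fun this v

end Characterization

/-- a linear game value `φ` is a `G`-symmetric quasi-value iff its
matrix `a_{iR} = φ(u_R)({i})` in the unanimity basis satisfies: (1) `a_{iR} = 0`
for `i ∉ R`; (2) every column sums to `1`; (3) the entries are constant on the
orbits of the action `g • (i, R) = (g i, g R)`. -/
theorem stmt0 {Ω : Type*} [Fintype Ω] [DecidableEq Ω] (G : Subgroup (Equiv.Perm Ω))
    (φ : GameValue Ω) :
    (IsQuasiValue φ ∧ IsGSym G φ) ↔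
      ((∀ (R : Finset Ω) (hR : R.Nonempty), ∀ i ∉ R, φ (unanimity R hR) i = 0) ∧
       (∀ (R : Finset Ω) (hR : R.Nonempty), ∑ i, φ (unanimity R hR) i = 1) ∧
       (∀ g ∈ G, ∀ (R : Finset Ω) (hR : R.Nonempty) (i : Ω),
          φ (unanimity R hR) i =
            φ (unanimity (R.image g) (hR.image g)) (g i))) := by
  constructor
  · rintro ⟨⟨hnull, heff⟩, hsym⟩
    refine ⟨fun R hR i hi => hnull _ i (isNullPlayer_unanimity hR hi),
      fun R hR => (heff _).trans (if_pos (subset_univ R)), fun g hg R hR i => ?_⟩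
    rw [← permGame_unanimity, hsym g hg, Equiv.Perm.coe_inv, Equiv.symm_apply_apply]
  · rintro ⟨hnull, heff, hsym⟩
    exact ⟨⟨fun v i => apply_eq_zero_of_isNullPlayer hnull, sum_apply_eq_apply_univ heff⟩,
      fun g hg => apply_permGame (hsym g hg)⟩
end

section
/- Let Ω be a finite set of players and G ≤ S_Ω a group whose action on Ω is not supertransitive, i.e. there exists a nonempty subset R̃ ⊆ Ω whose setwise stabilizer G_{R̃} does not act transitively on R̃. Then there exist infinitely many distinct G-symmetric quasi-values on Ω; equivalently, the affine space 𝒜_G of G-symmetric quasi-values has dimension at least 1. -/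
open scoped BigOperators

/-- A permutation group `G` acts supertransitively if for every subset `A`, the
setwise stabilizer `G_A = {g ∈ G : g(A) = A}` acts transitively on `A`. -/
def Supertransitive {Ω : Type*} [DecidableEq Ω] (G : Subgroup (Equiv.Perm Ω)) : Prop :=
  ∀ A : Finset Ω, ∀ i ∈ A, ∀ j ∈ A, ∃ g ∈ G, A.image g = A ∧ g i = j

set_option linter.unusedSectionVars false
section Aux

open Finset Equiv

variable {Ω : Type*} [Fintype Ω] [DecidableEq Ω]

lemma permGame_coe (g : Perm Ω) (v : GameSpace Ω) (R : Finset Ω) :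
    (permGame g v : Finset Ω → ℝ) R = (v : Finset Ω → ℝ) (R.image (g⁻¹ : Perm Ω)) := rfl

lemma permGame_add (g : Perm Ω) (v w : GameSpace Ω) :
    permGame g (v + w) = permGame g v + permGame g w := rfl

lemma permGame_smul (g : Perm Ω) (c : ℝ) (v : GameSpace Ω) :
    permGame g (c • v) = c • permGame g v := rfl

lemma permGame_mul (g h : Perm Ω) (v : GameSpace Ω) :
    permGame g (permGame h v) = permGame (g * h) v := by
  apply Subtype.ext
  funext R
  show (v : Finset Ω → ℝ) ((R.image (g⁻¹ : Perm Ω)).image (h⁻¹ : Perm Ω))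
      = (v : Finset Ω → ℝ) (R.image ((g * h)⁻¹ : Perm Ω))
  rw [Finset.image_image, mul_inv_rev, Equiv.Perm.coe_mul]

lemma null_permGame {g : Perm Ω} {v : GameSpace Ω} {i : Ω} (h : IsNullPlayer i v) :
    IsNullPlayer (g i) (permGame g v) := by
  intro R
  rw [permGame_coe, permGame_coe, Finset.image_insert]
  simpa using h (R.image (g⁻¹ : Perm Ω))

/-- rank of a player in a fixed enumeration -/
noncomputable def rnk (i : Ω) : ℕ := ((Fintype.equivFin Ω) i : ℕ)

lemma rnk_inj : Function.Injective (rnk (Ω := Ω)) := by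
  intro i j h
  exact (Fintype.equivFin Ω).injective (Fin.val_injective h)

/-- the marginal-contribution value w.r.t. a fixed order -/
noncomputable def marg : GameValue Ω where
  toFun v i := (v : Finset Ω → ℝ) (insert i (univ.filter fun j => rnk j < rnk i))
      - (v : Finset Ω → ℝ) (univ.filter fun j => rnk j < rnk i)
  map_add' v w := by funext i; show (v + w : Finset Ω → ℝ) _ - (v + w : Finset Ω → ℝ) _ = _; simp; ring
  map_smul' c v := by
    funext i
    show (c • v : GameSpace Ω).1 _ - (c • v : GameSpace Ω).1 _ = _
    simp [Submodule.coe_smul]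
    ring

lemma marg_null (v : GameSpace Ω) (i : Ω) (h : IsNullPlayer i v) : marg v i = 0 := by
  show (v : Finset Ω → ℝ) _ - (v : Finset Ω → ℝ) _ = 0
  rw [h]
  ring

lemma marg_eff (v : GameSpace Ω) : ∑ i, marg v i = (v : Finset Ω → ℝ) univ := by
  classical
  set e := Fintype.equivFin Ω with he
  have key : ∀ i : Ω, marg v i =
      (fun k : ℕ => (v : Finset Ω → ℝ) (univ.filter fun j => rnk j < k)) (rnk i + 1)
      - (fun k : ℕ => (v : Finset Ω → ℝ) (univ.filter fun j => rnk j < k)) (rnk i) := by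
    intro i
    have h1 : insert i (univ.filter fun j => rnk j < rnk i)
        = univ.filter fun j : Ω => rnk j < rnk i + 1 := by
      ext j
      simp only [Finset.mem_insert, Finset.mem_filter, Finset.mem_univ, true_and,
        Nat.lt_succ_iff, le_iff_lt_or_eq]
      constructor
      · rintro (rfl | h)
        · right; rfl
        · left; exact h
      · rintro (h | h)
        · right; exact h
        · left; exact rnk_inj h
    show (v : Finset Ω → ℝ) _ - (v : Finset Ω → ℝ) _ = _
    rw [h1]
  set f : ℕ → ℝ := fun k => (v : Finset Ω → ℝ) (univ.filter fun j => rnk j < k) with hf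
  have : ∑ i, marg v i = ∑ i : Ω, (f (rnk i + 1) - f (rnk i)) := by
    apply Finset.sum_congr rfl
    intro i _
    exact key i
  rw [this]
  have hr : ∀ i : Ω, rnk i = ((e i : Fin (Fintype.card Ω)) : ℕ) := fun i => rfl
  have : ∑ i : Ω, (f (rnk i + 1) - f (rnk i))
      = ∑ k : Fin (Fintype.card Ω), (f ((k : ℕ) + 1) - f (k : ℕ)) := by
    rw [← Equiv.sum_comp e (fun k : Fin (Fintype.card Ω) => f ((k : ℕ) + 1) - f (k : ℕ))]
    exact Finset.sum_congr rfl fun i _ => by rw [hr]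
  rw [this, Fin.sum_univ_eq_sum_range (fun k => f (k + 1) - f k), Finset.sum_range_sub f]
  have h0 : f 0 = 0 := by
    have : (univ.filter fun j : Ω => rnk j < 0) = ∅ := by simp
    simp only [hf, this]
    exact v.2
  have hn : f (Fintype.card Ω) = (v : Finset Ω → ℝ) univ := by
    have : (univ.filter fun j : Ω => rnk j < Fintype.card Ω) = univ :=
      Finset.filter_true_of_mem fun j _ => (e j).isLt
    simp only [hf, this]
  rw [h0, hn, sub_zero]

end Aux
section Aux2

open Finset Equiv

variable {Ω : Type*} [Fintype Ω] [DecidableEq Ω]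

/-- averaging the marginal value over `G` -/
noncomputable def phi0 (G : Subgroup (Perm Ω)) [Fintype G] : GameValue Ω where
  toFun v i := (Fintype.card G : ℝ)⁻¹ *
      ∑ g : G, marg (permGame (g : Perm Ω) v) ((g : Perm Ω) i)
  map_add' v w := by
    funext i
    simp only [Pi.add_apply]
    rw [← mul_add, ← Finset.sum_add_distrib]
    congr 1
    apply Finset.sum_congr rfl
    intro g _
    rw [permGame_add, map_add]
    rfl
  map_smul' c v := by
    funext i
    simp only [RingHom.id_apply, Pi.smul_apply, smul_eq_mul]
    rw [← mul_left_comm]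
    congr 1
    rw [Finset.mul_sum]
    apply Finset.sum_congr rfl
    intro g _
    rw [permGame_smul, map_smul]
    rfl

lemma phi0_null (G : Subgroup (Perm Ω)) [Fintype G] (v : GameSpace Ω) (i : Ω)
    (h : IsNullPlayer i v) : phi0 G v i = 0 := by
  show (Fintype.card G : ℝ)⁻¹ * ∑ g : G, marg (permGame (g : Perm Ω) v) ((g : Perm Ω) i) = 0
  rw [Finset.sum_eq_zero, mul_zero]
  intro g _
  exact marg_null _ _ (null_permGame h)

lemma image_inv_univ (g : Perm Ω) : (univ : Finset Ω).image (g : Perm Ω) = univ :=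
  Finset.image_univ_of_surjective g.surjective

lemma phi0_eff (G : Subgroup (Perm Ω)) [Fintype G] (v : GameSpace Ω) :
    ∑ i, phi0 G v i = (v : Finset Ω → ℝ) univ := by
  have hcard : (Fintype.card G : ℝ) ≠ 0 := by
    simp [Fintype.card_ne_zero]
  calc ∑ i, phi0 G v i
      = (Fintype.card G : ℝ)⁻¹ *
        ∑ g : G, ∑ i, marg (permGame (g : Perm Ω) v) ((g : Perm Ω) i) := by
        rw [show ∑ i, phi0 G v i = ∑ i : Ω, (Fintype.card G : ℝ)⁻¹ *
            ∑ g : G, marg (permGame (g : Perm Ω) v) ((g : Perm Ω) i) from rfl,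
          ← Finset.mul_sum, Finset.sum_comm]
    _ = (Fintype.card G : ℝ)⁻¹ * ∑ g : G, (v : Finset Ω → ℝ) univ := by
        congr 1
        apply Finset.sum_congr rfl
        intro g _
        rw [Equiv.sum_comp (g : Perm Ω) (marg (permGame (g : Perm Ω) v)), marg_eff]
        rw [permGame_coe, image_inv_univ]
    _ = (v : Finset Ω → ℝ) univ := by
        rw [Finset.sum_const, Finset.card_univ, nsmul_eq_mul, ← mul_assoc,
          inv_mul_cancel₀ hcard, one_mul]

lemma phi0_gsym (G : Subgroup (Perm Ω)) [Fintype G] : IsGSym G (phi0 G) := by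
  intro h hh v i
  show (Fintype.card G : ℝ)⁻¹ * ∑ g : G, marg (permGame (g : Perm Ω) (permGame h v)) ((g : Perm Ω) i)
      = (Fintype.card G : ℝ)⁻¹ * ∑ g : G, marg (permGame (g : Perm Ω) v) ((g : Perm Ω) (h⁻¹ i))
  congr 1
  rw [← Equiv.sum_comp (Equiv.mulRight (⟨h, hh⟩ : G))
    (fun g : G => marg (permGame (g : Perm Ω) v) ((g : Perm Ω) (h⁻¹ i)))]
  apply Finset.sum_congr rfl
  intro g _
  simp only [Equiv.coe_mulRight, Subgroup.coe_mul]
  rw [permGame_mul]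
  have h2 : ((g : Perm Ω) * h) (h⁻¹ i) = (g : Perm Ω) i := by simp
  rw [h2]

end Aux2
section Aux3

open Finset Equiv

variable {Ω : Type*} [Fintype Ω] [DecidableEq Ω]

/-- unanimity coefficient (Möbius transform) -/
noncomputable def moeb (v : GameSpace Ω) (S : Finset Ω) : ℝ :=
  ∑ T ∈ S.powerset, (-1 : ℝ) ^ (S.card - T.card) * (v : Finset Ω → ℝ) T

lemma moeb_add (v w : GameSpace Ω) (S : Finset Ω) :
    moeb (v + w) S = moeb v S + moeb w S := by
  unfold moeb
  rw [← Finset.sum_add_distrib]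
  apply Finset.sum_congr rfl
  intro T _
  show (-1:ℝ)^(S.card - T.card) * ((v : Finset Ω → ℝ) T + (w : Finset Ω → ℝ) T) = _
  ring

lemma moeb_smul (c : ℝ) (v : GameSpace Ω) (S : Finset Ω) :
    moeb (c • v) S = c * moeb v S := by
  unfold moeb
  rw [Finset.mul_sum]
  apply Finset.sum_congr rfl
  intro T _
  show (-1:ℝ)^(S.card - T.card) * (c * (v : Finset Ω → ℝ) T) = _
  ring

/-- if `k ∈ S` is a null player of `v`, the Möbius coefficient of `S` vanishes -/
lemma moeb_null {v : GameSpace Ω} {k : Ω} (h : IsNullPlayer k v) {S : Finset Ω}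
    (hk : k ∈ S) : moeb v S = 0 := by
  unfold moeb
  have hS : S = insert k (S.erase k) := (Finset.insert_erase hk).symm
  rw [hS, Finset.sum_powerset_insert (Finset.notMem_erase k S), ← Finset.sum_add_distrib]
  apply Finset.sum_eq_zero
  intro T hT
  have hTE : T ⊆ S.erase k := Finset.mem_powerset.mp hT
  have hkT : k ∉ T := fun hx => (Finset.notMem_erase k S) (hTE hx)
  have hins : (insert k T).card = T.card + 1 := Finset.card_insert_of_notMem hkT
  have hinsS : (insert k (S.erase k)).card = (S.erase k).card + 1 :=
    Finset.card_insert_of_notMem (Finset.notMem_erase k S)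
  have hle : T.card ≤ (S.erase k).card := Finset.card_le_card hTE
  have hv : (v : Finset Ω → ℝ) (insert k T) = (v : Finset Ω → ℝ) T := h T
  rw [hv, hins, hinsS]
  have e1 : (S.erase k).card + 1 - T.card = ((S.erase k).card - T.card) + 1 := by omega
  have e2 : (S.erase k).card + 1 - (T.card + 1) = (S.erase k).card - T.card := by omega
  rw [e1, e2, pow_succ]
  ring

/-- Möbius coefficient of a permuted game -/
lemma moeb_perm (g : Perm Ω) (v : GameSpace Ω) (S : Finset Ω) :
    moeb (permGame g v) S = moeb v (S.image (g⁻¹ : Perm Ω)) := by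
  unfold moeb
  apply Finset.sum_nbij' (fun T => T.image (g⁻¹ : Perm Ω)) (fun T => T.image (g : Perm Ω))
  · intro T hT
    simp only [Finset.mem_powerset] at hT ⊢
    exact Finset.image_subset_image hT
  · intro T hT
    simp only [Finset.mem_powerset] at hT ⊢
    have := Finset.image_subset_image (f := (g : Perm Ω)) hT
    rwa [Finset.image_image, show ((g : Perm Ω) ∘ (g⁻¹ : Perm Ω)) = id by
      funext x; simp, Finset.image_id] at this
  · intro T _
    rw [Finset.image_image, show ((g : Perm Ω) ∘ (g⁻¹ : Perm Ω)) = id by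
      funext x; simp, Finset.image_id]
  · intro T _
    rw [Finset.image_image, show ((g⁻¹ : Perm Ω) ∘ (g : Perm Ω)) = id by
      funext x; simp, Finset.image_id]
  · intro T _
    rw [permGame_coe]
    congr 2
    · rw [Finset.card_image_of_injective _ (g⁻¹ : Perm Ω).injective,
        Finset.card_image_of_injective _ (g⁻¹ : Perm Ω).injective]

/-- Möbius coefficient of the unanimity game at a set of the same size -/
lemma moeb_unanimity {R : Finset Ω} (hR : R.Nonempty) {S : Finset Ω}
    (hcard : S.card = R.card) :
    moeb (unanimity R hR) S = if S = R then 1 else 0 := by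
  unfold moeb
  have hval : ∀ T, ((unanimity R hR : GameSpace Ω) : Finset Ω → ℝ) T
      = if R ⊆ T then 1 else 0 := fun T => rfl
  by_cases hSR : S = R
  · subst hSR
    rw [if_pos rfl]
    rw [Finset.sum_eq_single S]
    · rw [hval, if_pos Finset.Subset.rfl, Nat.sub_self, pow_zero, one_mul]
    · intro T hT hne
      rw [hval, if_neg, mul_zero]
      intro hsub
      exact hne (Finset.Subset.antisymm (Finset.mem_powerset.mp hT) hsub)
    · intro h
      exact absurd (Finset.mem_powerset.mpr Finset.Subset.rfl) h
  · rw [if_neg hSR]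
    apply Finset.sum_eq_zero
    intro T hT
    rw [hval, if_neg, mul_zero]
    intro hsub
    have hTS := Finset.mem_powerset.mp hT
    have h1 : R.card ≤ T.card := Finset.card_le_card hsub
    have h2 : T.card ≤ S.card := Finset.card_le_card hTS
    have hRT : R = T := Finset.eq_of_subset_of_card_le hsub (by omega)
    have hTS' : T = S := Finset.eq_of_subset_of_card_le hTS (by omega)
    exact hSR (hTS'.symm.trans hRT.symm)

end Aux3
section Aux4

open Finset Equiv

variable {Ω : Type*} [Fintype Ω] [DecidableEq Ω]

/-- the direction of variation built from a witness of non-supertransitivity -/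
noncomputable def psi (G : Subgroup (Perm Ω)) [Fintype G] (Rt : Finset Ω) (i0 j0 : Ω) :
    GameValue Ω where
  toFun v k := ∑ g : G, ((if (g : Perm Ω) i0 = k then (1:ℝ) else 0)
      - (if (g : Perm Ω) j0 = k then 1 else 0)) * moeb v (Rt.image (g : Perm Ω))
  map_add' v w := by
    funext k
    simp only [Pi.add_apply]
    rw [← Finset.sum_add_distrib]
    apply Finset.sum_congr rfl
    intro g _
    rw [moeb_add]
    ring
  map_smul' c v := by
    funext k
    simp only [RingHom.id_apply, Pi.smul_apply, smul_eq_mul, Finset.mul_sum]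
    apply Finset.sum_congr rfl
    intro g _
    rw [moeb_smul]
    ring

lemma psi_null (G : Subgroup (Perm Ω)) [Fintype G] (Rt : Finset Ω) (i0 j0 : Ω)
    (hi0 : i0 ∈ Rt) (hj0 : j0 ∈ Rt) (v : GameSpace Ω) (k : Ω)
    (h : IsNullPlayer k v) : psi G Rt i0 j0 v k = 0 := by
  apply Finset.sum_eq_zero
  intro g _
  by_cases h1 : (g : Perm Ω) i0 = k
  · rw [moeb_null h (h1 ▸ Finset.mem_image_of_mem _ hi0), mul_zero]
  · by_cases h2 : (g : Perm Ω) j0 = k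
    · rw [moeb_null h (h2 ▸ Finset.mem_image_of_mem _ hj0), mul_zero]
    · rw [if_neg h1, if_neg h2, sub_zero, zero_mul]

lemma psi_eff (G : Subgroup (Perm Ω)) [Fintype G] (Rt : Finset Ω) (i0 j0 : Ω)
    (v : GameSpace Ω) : ∑ k, psi G Rt i0 j0 v k = 0 := by
  show ∑ k, ∑ g : G, ((if (g : Perm Ω) i0 = k then (1:ℝ) else 0)
      - (if (g : Perm Ω) j0 = k then 1 else 0)) * moeb v (Rt.image (g : Perm Ω)) = 0
  rw [Finset.sum_comm]
  apply Finset.sum_eq_zero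
  intro g _
  rw [← Finset.sum_mul]
  have : ∑ k, ((if (g : Perm Ω) i0 = k then (1:ℝ) else 0)
      - (if (g : Perm Ω) j0 = k then 1 else 0)) = 0 := by
    rw [Finset.sum_sub_distrib, Finset.sum_ite_eq, Finset.sum_ite_eq]
    simp
  rw [this, zero_mul]

lemma psi_gsym (G : Subgroup (Perm Ω)) [Fintype G] (Rt : Finset Ω) (i0 j0 : Ω) :
    IsGSym G (psi G Rt i0 j0) := by
  intro h hh v k
  show ∑ g : G, ((if (g : Perm Ω) i0 = k then (1:ℝ) else 0)
      - (if (g : Perm Ω) j0 = k then 1 else 0)) * moeb (permGame h v) (Rt.image (g : Perm Ω))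
    = ∑ g : G, ((if (g : Perm Ω) i0 = h⁻¹ k then (1:ℝ) else 0)
      - (if (g : Perm Ω) j0 = h⁻¹ k then 1 else 0)) * moeb v (Rt.image (g : Perm Ω))
  rw [← Equiv.sum_comp (Equiv.mulLeft (⟨h, hh⟩ : G))
    (fun g : G => ((if (g : Perm Ω) i0 = k then (1:ℝ) else 0)
      - (if (g : Perm Ω) j0 = k then 1 else 0)) * moeb (permGame h v) (Rt.image (g : Perm Ω)))]
  apply Finset.sum_congr rfl
  intro g _
  simp only [Equiv.coe_mulLeft, Subgroup.coe_mul]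
  rw [moeb_perm]
  have himg : ((Rt.image ((h * (g : Perm Ω)) : Perm Ω)).image ((h : Perm Ω)⁻¹ : Perm Ω))
      = Rt.image (g : Perm Ω) := by
    rw [Finset.image_image]
    apply Finset.image_congr
    intro x _
    simp [Equiv.Perm.mul_apply]
  have hi : ((h * (g : Perm Ω)) i0 = k) ↔ ((g : Perm Ω) i0 = h⁻¹ k) := by
    rw [Equiv.Perm.mul_apply]
    constructor
    · intro hx; rw [← hx]; simp
    · intro hx; rw [hx]; simp
  have hj : ((h * (g : Perm Ω)) j0 = k) ↔ ((g : Perm Ω) j0 = h⁻¹ k) := by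
    rw [Equiv.Perm.mul_apply]
    constructor
    · intro hx; rw [← hx]; simp
    · intro hx; rw [hx]; simp
  rw [himg]
  simp only [hi, hj]

lemma psi_neg (G : Subgroup (Perm Ω)) [Fintype G] (Rt : Finset Ω) (i0 j0 : Ω)
    (hR : Rt.Nonempty)
    (hno : ∀ g ∈ G, Rt.image (g : Perm Ω) = Rt → ¬ (g : Perm Ω) i0 = j0) :
    psi G Rt i0 j0 (unanimity Rt hR) j0 < 0 := by
  have hterm : ∀ g : G, ((if (g : Perm Ω) i0 = j0 then (1:ℝ) else 0)
      - (if (g : Perm Ω) j0 = j0 then 1 else 0)) * moeb (unanimity Rt hR) (Rt.image (g : Perm Ω))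
      ≤ 0 := by
    intro g
    rw [moeb_unanimity hR (Finset.card_image_of_injective _ (g : Perm Ω).injective)]
    by_cases him : Rt.image (g : Perm Ω) = Rt
    · rw [if_pos him, mul_one, if_neg (hno (g : Perm Ω) g.2 him)]
      split <;> norm_num
    · rw [if_neg him, mul_zero]
  have hij : ¬ i0 = j0 := by
    intro e
    exact hno 1 (Subgroup.one_mem G) (by simp) (by simp [e])
  have h1 : ((if ((1 : G) : Perm Ω) i0 = j0 then (1:ℝ) else 0)
      - (if ((1 : G) : Perm Ω) j0 = j0 then 1 else 0))
      * moeb (unanimity Rt hR) (Rt.image ((1 : G) : Perm Ω)) < 0 := by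
    simp only [OneMemClass.coe_one, Equiv.Perm.coe_one, Finset.image_id, id_eq]
    rw [moeb_unanimity hR rfl]
    simp [hij]
  calc psi G Rt i0 j0 (unanimity Rt hR) j0 < ∑ _g : G, (0:ℝ) :=
        Finset.sum_lt_sum (fun g _ => hterm g) ⟨1, Finset.mem_univ _, h1⟩
    _ = 0 := by rw [Finset.sum_const, smul_zero]

end Aux4
/-- if the action of `G` on `Ω` is not supertransitive, then there
are infinitely many `G`-symmetric quasi-values; equivalently the affine space
`𝒜_G` has dimension at least `1`. -/
theorem stmt8 {Ω : Type*} [Fintype Ω] [DecidableEq Ω] (G : Subgroup (Equiv.Perm Ω))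
    (hG : ¬ Supertransitive G) :
    {φ : GameValue Ω | IsQuasiValue φ ∧ IsGSym G φ}.Infinite ∧
    1 ≤ Module.finrank ℝ
        (affineSpan ℝ {φ : GameValue Ω | IsQuasiValue φ ∧ IsGSym G φ}).direction := by
  classical
  haveI : Fintype G := Fintype.ofFinite G
  unfold Supertransitive at hG
  push_neg at hG
  obtain ⟨A, i0, hi0, j0, hj0, hno⟩ := hG
  have hA : A.Nonempty := ⟨i0, hi0⟩
  set S : Set (GameValue Ω) := {φ : GameValue Ω | IsQuasiValue φ ∧ IsGSym G φ} with hSdef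
  -- the family of quasi-values
  have hmem : ∀ t : ℝ, phi0 G + t • psi G A i0 j0 ∈ S := by
    intro t
    refine ⟨⟨?_, ?_⟩, ?_⟩
    · intro v i hnull
      have e1 : (phi0 G + t • psi G A i0 j0) v i
          = phi0 G v i + t * psi G A i0 j0 v i := rfl
      rw [e1, phi0_null G v i hnull, psi_null G A i0 j0 hi0 hj0 v i hnull]
      ring
    · intro v
      have e1 : ∀ i, (phi0 G + t • psi G A i0 j0) v i
          = phi0 G v i + t * psi G A i0 j0 v i := fun i => rfl
      calc ∑ i, (phi0 G + t • psi G A i0 j0) v i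
          = ∑ i, (phi0 G v i + t * psi G A i0 j0 v i) :=
            Finset.sum_congr rfl fun i _ => e1 i
        _ = ∑ i, phi0 G v i + t * ∑ i, psi G A i0 j0 v i := by
            rw [Finset.sum_add_distrib, Finset.mul_sum]
        _ = (v : Finset Ω → ℝ) Finset.univ := by
            rw [phi0_eff, psi_eff, mul_zero, add_zero]
    · intro g hg v i
      have e1 : ∀ (w : GameSpace Ω) (k : Ω), (phi0 G + t • psi G A i0 j0) w k
          = phi0 G w k + t * psi G A i0 j0 w k := fun w k => rfl
      rw [e1, e1, phi0_gsym G g hg v i, psi_gsym G A i0 j0 g hg v i]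
  have hψneg : psi G A i0 j0 (unanimity A hA) j0 < 0 :=
    psi_neg G A i0 j0 hA hno
  have hψne : psi G A i0 j0 ≠ 0 := by
    intro h
    rw [h] at hψneg
    simp at hψneg
  constructor
  · apply Set.infinite_of_injective_forall_mem
      (f := fun t : ℝ => phi0 G + t • psi G A i0 j0)
    · intro s t hst
      have : s • psi G A i0 j0 = t • psi G A i0 j0 := by
        simpa using add_left_cancel hst
      exact smul_left_injective ℝ hψne this
    · exact hmem
  · have h0 : phi0 G ∈ affineSpan ℝ S := by
      have := hmem 0
      rw [zero_smul, add_zero] at this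
      exact subset_affineSpan ℝ S this
    have h1 : phi0 G + psi G A i0 j0 ∈ affineSpan ℝ S := by
      have := hmem 1
      rw [one_smul] at this
      exact subset_affineSpan ℝ S this
    have hdir : psi G A i0 j0 ∈ (affineSpan ℝ S).direction := by
      have := AffineSubspace.vsub_mem_direction h1 h0
      simpa [vsub_eq_sub] using this
    haveI : FiniteDimensional ℝ (GameValue Ω) := by infer_instance
    rw [Nat.one_le_iff_ne_zero]
    intro hrank
    have : Subsingleton (affineSpan ℝ S).direction :=
      Module.finrank_zero_iff.mp hrank
    have := Subsingleton.elim (⟨psi G A i0 j0, hdir⟩ : (affineSpan ℝ S).direction) 0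
    apply hψne
    simpa [Submodule.mk_eq_zero] using this
end

section
/- Let n ≥ 1 and let G ≤ S_n be a permutation group acting supertransitively on {1,…,n}. Then G is set-transitive: for any two subsets A, B ⊆ {1,…,n} with |A| = |B|, there exists a permutation π ∈ G with π(A) = B. -/
open Finset

variable {Ω : Type*} [DecidableEq Ω] {G : Subgroup (Equiv.Perm Ω)}

theorem Finset.insert_erase_sdiff_of_mem {A B : Finset Ω} {b : Ω} (a : Ω) (hb : b ∈ B) :
    insert b (A.erase a) \ B = (A \ B).erase a := by
  ext x
  simp only [mem_sdiff, mem_insert, mem_erase]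
  constructor
  · rintro ⟨rfl | hx, hxB⟩
    · exact absurd hb hxB
    · exact ⟨hx.1, hx.2, hxB⟩
  · rintro ⟨hxa, hxA, hxB⟩
    exact ⟨Or.inr ⟨hxa, hxA⟩, hxB⟩

namespace Supertransitive

theorem exists_image_eq_insert_erase (hG : Supertransitive G) {A : Finset Ω} {a b : Ω}
    (ha : a ∈ A) (hb : b ∉ A) : ∃ g ∈ G, A.image g = insert b (A.erase a) := by
  obtain ⟨g, hgG, hg, hgb⟩ := hG (insert b A) b (mem_insert_self b A) a (mem_insert_of_mem ha)
  have hab : a ≠ b := ne_of_mem_of_not_mem ha hb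
  refine ⟨g, hgG, ?_⟩
  calc A.image g = ((insert b A).erase b).image g := by rw [erase_insert hb]
    _ = ((insert b A).image g).erase (g b) := image_erase g.injective _ _
    _ = insert b (A.erase a) := by rw [hg, hgb, erase_insert_of_ne hab.symm]

theorem exists_image_eq (hG : Supertransitive G) {A B : Finset Ω} (hAB : #A = #B) :
    ∃ g ∈ G, A.image g = B := by
  induction hk : #(A \ B) using Nat.strong_induction_on generalizing A with
  | _ k ih =>
    by_cases hAB' : A = B
    · exact ⟨1, G.one_mem, by simp [hAB']⟩
    obtain ⟨a, ha⟩ : (A \ B).Nonempty :=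
      sdiff_nonempty.mpr fun h ↦ hAB' (eq_of_subset_of_card_le h hAB.ge)
    obtain ⟨b, hb⟩ : (B \ A).Nonempty :=
      sdiff_nonempty.mpr fun h ↦ hAB' (eq_of_subset_of_card_le h hAB.le).symm
    obtain ⟨g, hgG, hg⟩ := hG.exists_image_eq_insert_erase (mem_sdiff.mp ha).1 (mem_sdiff.mp hb).2
    have hcard : #(A.image g) = #B := by rw [card_image_of_injective _ g.injective, hAB]
    have hsmaller : #(A.image g \ B) < k := by
      rw [hg, insert_erase_sdiff_of_mem a (mem_sdiff.mp hb).1, card_erase_of_mem ha, hk]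
      exact Nat.sub_one_lt_of_lt (hk ▸ card_pos.mpr ⟨a, ha⟩)
    obtain ⟨h, hhG, hh⟩ := ih _ hsmaller hcard rfl
    exact ⟨h * g, G.mul_mem hhG hgG, by rw [Equiv.Perm.coe_mul, ← image_image, hh]⟩

end Supertransitive

theorem stmt9_general (n : ℕ) (G : Subgroup (Equiv.Perm (Fin n)))
    (hG : Supertransitive G) :
    ∀ A B : Finset (Fin n), A.card = B.card → ∃ g ∈ G, A.image g = B :=
  fun _ _ ↦ hG.exists_image_eq

/-- a supertransitive permutation group is set-transitive. -/
theorem stmt9 (n : ℕ) (hn : 1 ≤ n) (G : Subgroup (Equiv.Perm (Fin n)))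
    (hG : Supertransitive G) :
    ∀ A B : Finset (Fin n), A.card = B.card → ∃ g ∈ G, A.image g = B :=
  stmt9_general n G hG
end

section
/- Let n ≥ 1 and let G ≤ S_n act supertransitively on {1,…,n}. Then for every k with 1 ≤ k ≤ n, the order |G| is divisible by k; hence |G| is divisible by the least common multiple of {1, 2, …, n}. -/
open Pointwise

/-- the order of a supertransitive group `G ≤ Sₙ` is divisible by
every `k` with `1 ≤ k ≤ n`, hence by `lcm{1, 2, …, n}`. -/
theorem stmt10 (n : ℕ) (hn : 1 ≤ n) (G : Subgroup (Equiv.Perm (Fin n)))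
    (hG : Supertransitive G) :
    (∀ k, 1 ≤ k → k ≤ n → k ∣ Nat.card G) ∧
    (Finset.Icc 1 n).lcm id ∣ Nat.card G := by
  have key : ∀ k, 1 ≤ k → k ≤ n → k ∣ Nat.card G := by
    intro k hk1 hkn
    obtain ⟨A, hAsub, hAcard⟩ := Finset.exists_subset_card_eq
      (s := (Finset.univ : Finset (Fin n))) (n := k) (by simpa using hkn)
    have hAne : A.Nonempty := Finset.card_pos.mp (by omega)
    obtain ⟨i, hi⟩ := hAne
    set H := MulAction.stabilizer G (↑A : Set (Fin n)) with hH
    have horb : MulAction.orbit H i = (↑A : Set (Fin n)) := by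
      ext j
      constructor
      · rintro ⟨⟨g, hg⟩, rfl⟩
        have : (g : Equiv.Perm (Fin n)) • (↑A : Set (Fin n)) = ↑A := hg
        rw [← this]
        exact ⟨i, hi, rfl⟩
      · intro hj
        obtain ⟨g, hgG, hgA, hgi⟩ := hG A i hi j hj
        have hstab : (⟨g, hgG⟩ : G) ∈ H := by
          show (⟨g, hgG⟩ : G) • (↑A : Set (Fin n)) = ↑A
          show g • (↑A : Set (Fin n)) = ↑A
          ext x
          constructor
          · rintro ⟨y, hy, rfl⟩
            rw [← hgA]
            exact Finset.mem_coe.mpr (Finset.mem_image_of_mem g hy)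
          · intro hx
            rw [← hgA] at hx
            obtain ⟨y, hy, rfl⟩ := Finset.mem_image.mp hx
            exact ⟨y, hy, rfl⟩
        exact ⟨⟨⟨g, hgG⟩, hstab⟩, hgi⟩
    have hcard_orb : Nat.card (MulAction.orbit H i) = k := by
      rw [horb, Nat.card_coe_set_eq, Set.ncard_coe_finset, hAcard]
    have h1 : k ∣ Nat.card H := by
      have := Nat.card_congr (MulAction.orbitProdStabilizerEquivGroup H i)
      rw [Nat.card_prod, hcard_orb] at this
      exact ⟨_, this.symm⟩
    exact h1.trans (Subgroup.card_subgroup_dvd_card H)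
  refine ⟨key, Finset.lcm_dvd ?_⟩
  intro b hb
  simp only [Finset.mem_Icc] at hb
  exact key b hb.1 hb.2
end

section
/- Let Ω = {1,…,n}, G ≤ S_n, and let A : S_n → [0,1] be a probability distribution on S_n (∑_{π∈S_n} A^π = 1, A^π ≥ 0) that is constant on the right cosets of G, i.e. A^{gπ} = A^π for all g ∈ G and π ∈ S_n. Then the game value φ = ∑_{π∈S_n} A^π m_π, the A-weighted average of the marginal operators, is a G-symmetric quasi-value. -/
open scoped BigOperators

/-- The marginal operator `m_π`: the player at arrival position `π⁻¹(j)` receives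
her marginal contribution to the coalition of previously arrived players. -/
def marginalValue {n : ℕ} (π : Equiv.Perm (Fin n)) : GameValue (Fin n) where
  toFun v j :=
    (v : Finset (Fin n) → ℝ) (Finset.univ.filter fun k => π⁻¹ k ≤ π⁻¹ j) -
    (v : Finset (Fin n) → ℝ) (Finset.univ.filter fun k => π⁻¹ k < π⁻¹ j)
  map_add' a b := by
    funext j
    simp only [Submodule.coe_add, Pi.add_apply]
    ring
  map_smul' c a := by
    funext j
    simp only [Submodule.coe_smul, Pi.smul_apply, RingHom.id_apply, smul_eq_mul]
    ring

/-!
Each marginal operator `m_π` is a quasi-value: a null player adds nothing to the coalition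
of her predecessors, and the marginal contributions telescope to `v(Ω)`. Both properties are
preserved by combinations with weights summing to one. For symmetry,
`m_π(g • v) = g • m_{g⁻¹π}(v)`, and the reindexing `π ↦ g⁻¹π` leaves `A` unchanged.
-/

section QuasiValue

variable {Ω : Type*} [DecidableEq Ω]

theorem GameValue.sum_smul_apply {ι : Type*} (s : Finset ι) (w : ι → ℝ) (φ : ι → GameValue Ω)
    (v : GameSpace Ω) (i : Ω) : (∑ k ∈ s, w k • φ k) v i = ∑ k ∈ s, w k * φ k v i := by
  simp [LinearMap.sum_apply, Finset.sum_apply]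

theorem IsQuasiValue.sum_smul [Fintype Ω] {ι : Type*} {s : Finset ι} {φ : ι → GameValue Ω}
    {w : ι → ℝ} (hφ : ∀ k ∈ s, IsQuasiValue (φ k)) (hw : ∑ k ∈ s, w k = 1) :
    IsQuasiValue (∑ k ∈ s, w k • φ k) := by
  refine ⟨fun v i hi => ?_, fun v => ?_⟩
  · rw [GameValue.sum_smul_apply]
    exact Finset.sum_eq_zero fun k hk => by rw [(hφ k hk).1 v i hi, mul_zero]
  · calc ∑ i, (∑ k ∈ s, w k • φ k) v i = ∑ k ∈ s, w k * ∑ i, φ k v i := by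
          simp only [GameValue.sum_smul_apply, Finset.mul_sum]
          exact Finset.sum_comm
      _ = (v : Finset Ω → ℝ) Finset.univ := by
          rw [Finset.sum_congr rfl fun k hk => by rw [(hφ k hk).2 v], ← Finset.sum_mul, hw,
            one_mul]

end QuasiValue

namespace marginalValue

variable {n : ℕ}

theorem apply (π : Equiv.Perm (Fin n)) (v : GameSpace (Fin n)) (j : Fin n) :
    marginalValue π v j =
      (v : Finset (Fin n) → ℝ) (Finset.univ.filter fun k => π⁻¹ k ≤ π⁻¹ j) -
      (v : Finset (Fin n) → ℝ) (Finset.univ.filter fun k => π⁻¹ k < π⁻¹ j) :=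
  rfl

theorem eq_zero_of_isNullPlayer (π : Equiv.Perm (Fin n)) {v : GameSpace (Fin n)} {i : Fin n}
    (h : IsNullPlayer i v) : marginalValue π v i = 0 := by
  have hpred : (Finset.univ.filter fun k => π⁻¹ k ≤ π⁻¹ i) =
      insert i (Finset.univ.filter fun k => π⁻¹ k < π⁻¹ i) := by
    ext k
    simp [le_iff_lt_or_eq, or_comm]
  rw [apply, hpred, h, sub_self]

theorem sum_apply (π : Equiv.Perm (Fin n)) (v : GameSpace (Fin n)) :
    ∑ i, marginalValue π v i = (v : Finset (Fin n) → ℝ) Finset.univ := by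
  -- `F m` is the worth of the coalition of the first `m` arrivals.
  set F : ℕ → ℝ := fun m =>
    (v : Finset (Fin n) → ℝ) (Finset.univ.filter fun k => ((π⁻¹ k : Fin n) : ℕ) < m)
  have hstep (t : Fin n) : marginalValue π v (π t) = F (t + 1) - F t := by
    simp only [apply, F]
    congr! 2 <;> ext k <;> simp
  have hF0 : F 0 = 0 := by
    simp only [F, Nat.not_lt_zero, Finset.filter_false]
    exact v.2
  have hFn : F n = (v : Finset (Fin n) → ℝ) Finset.univ := by simp [F]
  calc ∑ i, marginalValue π v i = ∑ t : Fin n, (F (t + 1) - F t) := by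
        rw [← Equiv.sum_comp π]; exact Finset.sum_congr rfl fun t _ => hstep t
    _ = F n - F 0 := by
        rw [Fin.sum_univ_eq_sum_range (fun m => F (m + 1) - F m), Finset.sum_range_sub]
    _ = _ := by rw [hFn, hF0, sub_zero]

theorem isQuasiValue (π : Equiv.Perm (Fin n)) : IsQuasiValue (marginalValue π) :=
  ⟨fun _ _ h => eq_zero_of_isNullPlayer π h, sum_apply π⟩

theorem permGame_apply (π g : Equiv.Perm (Fin n)) (v : GameSpace (Fin n)) (i : Fin n) :
    marginalValue π (permGame g v) i = marginalValue (g⁻¹ * π) v (g⁻¹ i) := by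
  have himage (p : Fin n → Prop) [DecidablePred p] :
      (Finset.univ.filter p).image (g⁻¹ : Equiv.Perm (Fin n)) =
        Finset.univ.filter fun m => p (g m) := by
    ext m
    simp [Equiv.symm_apply_eq]
  rw [apply, permGame, Subtype.coe_mk, himage, himage]
  simp [apply]

end marginalValue

theorem isGSym_sum_smul_marginalValue {n : ℕ} {G : Subgroup (Equiv.Perm (Fin n))}
    {A : Equiv.Perm (Fin n) → ℝ} (hAG : ∀ g ∈ G, ∀ π : Equiv.Perm (Fin n), A (g * π) = A π) :
    IsGSym G (∑ π : Equiv.Perm (Fin n), A π • marginalValue π) := by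
  intro g hg v i
  simp only [GameValue.sum_smul_apply, marginalValue.permGame_apply]
  -- reindex by `π ↦ g⁻¹ * π`, which leaves `A` unchanged since `g ∈ G`
  exact Fintype.sum_equiv (Equiv.mulLeft g⁻¹) _ _ fun π => by
    simp [← hAG g hg (g⁻¹ * π)]

theorem stmt15_general {n : ℕ} (G : Subgroup (Equiv.Perm (Fin n)))
    (A : Equiv.Perm (Fin n) → ℝ)
    (hA1 : ∑ π : Equiv.Perm (Fin n), A π = 1)
    (hAG : ∀ g ∈ G, ∀ π : Equiv.Perm (Fin n), A (g * π) = A π) :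
    IsQuasiValue (∑ π : Equiv.Perm (Fin n), A π • marginalValue π) ∧
    IsGSym G (∑ π : Equiv.Perm (Fin n), A π • marginalValue π) :=
  ⟨IsQuasiValue.sum_smul (fun π _ => marginalValue.isQuasiValue π) hA1,
    isGSym_sum_smul_marginalValue hAG⟩

/-- if `A` is a probability distribution on `Sₙ` constant on the
right cosets of `G` (i.e. `A^{gπ} = A^π` for `g ∈ G`), then the `A`-weighted
average of the marginal operators is a `G`-symmetric quasi-value. -/
theorem stmt15 {n : ℕ} (G : Subgroup (Equiv.Perm (Fin n)))
    (A : Equiv.Perm (Fin n) → ℝ) (hA0 : ∀ π, 0 ≤ A π)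
    (hA1 : ∑ π : Equiv.Perm (Fin n), A π = 1)
    (hAG : ∀ g ∈ G, ∀ π : Equiv.Perm (Fin n), A (g * π) = A π) :
    IsQuasiValue (∑ π : Equiv.Perm (Fin n), A π • marginalValue π) ∧
    IsGSym G (∑ π : Equiv.Perm (Fin n), A π • marginalValue π) :=
  stmt15_general G A hA1 hAG
end

section
/- Let Ω = {1,…,n} with n > 3, and let A : S_n → ℝ be the probability distribution defined by A^π = s/n! if π is even and A^π = (2−s)/n! if π is odd, for a fixed s ∈ [0,2]. Then ∑_{π∈S_n} A^π m_π equals the Shapley value; i.e. for every game v and every i ∈ Ω, ∑_{π∈S_n} A^π m_π(v)_i = ∑_{π∈S_n} (1/n!) m_π(v)_i. -/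
open scoped BigOperators

/-
The signed sum `∑_π sign(π) m_π(v)_i` vanishes: if `p = π⁻¹ i` is the position of player
`i`, then for `n ≥ 4` there are two other positions `c, d` on the same side of `p`, and
composing `π` with the transposition `(c d)` flips the sign without changing the set of
predecessors of `i`. Writing the weight as `A^π = 1/n! + (s - 1)/n! · sign π`, the weighted
sum is therefore the uniform one.
-/

open Equiv Finset

lemma Equiv.swap_apply_iff {α : Type*} [DecidableEq α] {P : α → Prop} {c d : α}
    (h : P c ↔ P d) (x : α) : P (swap c d x) ↔ P x := by
  rcases eq_or_ne x c with rfl | hc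
  · rw [swap_apply_left, h]
  rcases eq_or_ne x d with rfl | hd
  · rw [swap_apply_right, h]
  · rw [swap_apply_of_ne_of_ne hc hd]

lemma Fin.exists_ne_ne_lt_iff_lt {n : ℕ} (hn : 3 < n) (p : Fin n) :
    ∃ c d : Fin n, c ≠ d ∧ c ≠ p ∧ d ≠ p ∧ (c < p ↔ d < p) := by
  by_cases hp : 2 ≤ p.val
  · refine ⟨⟨0, by omega⟩, ⟨1, by omega⟩, ?_⟩
    simp [Fin.ext_iff, Fin.lt_def]; omega
  · refine ⟨⟨n - 2, by omega⟩, ⟨n - 1, by omega⟩, ?_⟩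
    simp [Fin.ext_iff, Fin.lt_def]; omega

lemma marginalValue_mul_swap {n : ℕ} (π : Perm (Fin n)) (v : GameSpace (Fin n))
    (i : Fin n) {c d : Fin n} (hc : c ≠ π⁻¹ i) (hd : d ≠ π⁻¹ i)
    (hlt : c < π⁻¹ i ↔ d < π⁻¹ i) :
    marginalValue (π * swap c d) v i = marginalValue π v i := by
  have hinv : ∀ k, (π * swap c d)⁻¹ k = swap c d (π⁻¹ k) := by
    simp [mul_inv_rev, Perm.mul_apply, swap_inv]
  have hpos : (π * swap c d)⁻¹ i = π⁻¹ i := by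
    rw [hinv, swap_apply_of_ne_of_ne hc.symm hd.symm]
  have hle : c ≤ π⁻¹ i ↔ d ≤ π⁻¹ i := by rw [hc.le_iff_lt, hd.le_iff_lt, hlt]
  simp only [marginalValue, LinearMap.coe_mk, AddHom.coe_mk, hpos]
  simp only [hinv, swap_apply_iff (P := (· ≤ π⁻¹ i)) hle,
    swap_apply_iff (P := (· < π⁻¹ i)) hlt]

theorem sum_sign_mul_marginalValue {n : ℕ} (hn : 3 < n) (v : GameSpace (Fin n))
    (i : Fin n) :
    ∑ π : Perm (Fin n), ((Perm.sign π : ℤ) : ℝ) * marginalValue π v i = 0 := by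
  choose c d hcd hc hd hlt using Fin.exists_ne_ne_lt_iff_lt hn
  let τ : Perm (Fin n) → Perm (Fin n) := fun π => π * swap (c (π⁻¹ i)) (d (π⁻¹ i))
  have hpos : ∀ π, (τ π)⁻¹ i = π⁻¹ i := fun π => by
    simp only [τ, mul_inv_rev, Perm.mul_apply, swap_inv]
    exact swap_apply_of_ne_of_ne (hc _).symm (hd _).symm
  refine sum_ninvolution τ (fun π => ?_) (fun π _ hfix => ?_) (fun _ => mem_univ _)
    (fun π => ?_)
  · rw [marginalValue_mul_swap π v i (hc _) (hd _) (hlt _), Perm.sign_mul,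
      Perm.sign_swap (hcd _)]
    push_cast
    ring
  · exact hcd _ (swap_eq_one_iff.mp (mul_eq_left.mp hfix))
  · rw [show τ (τ π) = τ π * swap (c (π⁻¹ i)) (d (π⁻¹ i)) by simp only [τ, hpos π],
      mul_assoc, swap_mul_self, mul_one]

lemma Equiv.Perm.ite_sign_eq_one {α : Type*} [Fintype α] [DecidableEq α] (π : Perm α)
    (x y : ℝ) :
    (if Perm.sign π = 1 then x else y) =
      (x + y) / 2 + (x - y) / 2 * ((Perm.sign π : ℤ) : ℝ) := by
  rcases Int.units_eq_one_or (Perm.sign π) with h | h <;> simp [h] <;> ring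

theorem stmt16_general {n : ℕ} (hn : 3 < n) (s : ℝ)
    (A : Equiv.Perm (Fin n) → ℝ)
    (hA : ∀ π : Equiv.Perm (Fin n),
        A π = if Equiv.Perm.sign π = 1 then s / (n.factorial : ℝ)
              else (2 - s) / (n.factorial : ℝ)) :
    ∀ (v : GameSpace (Fin n)) (i : Fin n),
      ∑ π : Equiv.Perm (Fin n), A π * marginalValue π v i =
        ∑ π : Equiv.Perm (Fin n), (1 / (n.factorial : ℝ)) * marginalValue π v i := by
  intro v i
  have hA_sign : ∀ π, A π =
      1 / (n.factorial : ℝ) + (s - 1) / n.factorial * ((Perm.sign π : ℤ) : ℝ) := by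
    intro π
    rw [hA, Perm.ite_sign_eq_one]
    ring
  simp only [hA_sign, add_mul, sum_add_distrib, mul_assoc, ← mul_sum,
    sum_sign_mul_marginalValue hn, mul_zero, add_zero]

/-- for `n > 3` and the distribution giving weight `s/n!` to even
and `(2-s)/n!` to odd permutations (`s ∈ [0,2]`), the weighted average of the
marginal operators equals the Shapley value, i.e. the uniform average. -/
theorem stmt16 {n : ℕ} (hn : 3 < n) (s : ℝ) (hs0 : 0 ≤ s) (hs2 : s ≤ 2)
    (A : Equiv.Perm (Fin n) → ℝ)
    (hA : ∀ π : Equiv.Perm (Fin n),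
        A π = if Equiv.Perm.sign π = 1 then s / (n.factorial : ℝ)
              else (2 - s) / (n.factorial : ℝ)) :
    ∀ (v : GameSpace (Fin n)) (i : Fin n),
      ∑ π : Equiv.Perm (Fin n), A π * marginalValue π v i =
        ∑ π : Equiv.Perm (Fin n), (1 / (n.factorial : ℝ)) * marginalValue π v i :=
  stmt16_general hn s A hA
end
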